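/- Let X = [0,1] ∪ [2,3], f_1(x) = x² on [0,1], f_1(x) = (x−2)^{1/3} + 2 on [2,3], f_2(x) = x+2 on [0,1], f_2(x) = x−2 on [2,3], F = Γ(f_1) ∪ Γ(f_2), and A = {x ∈ X_F^+ : x(k) ∈ {0,2} for all k}. Then σ_F^+(A) ⊆ A, σ_F^+(X_F^+ \ A) ⊆ X_F^+ \ A, and (X_F^+, σ_F^+) has sensitive dependence on initial conditions with respect to A. -/

import Mathlib

open Set

/-- `X = [0,1] ∪ [2,3]`. -/
def XS : Set ℝ := Icc 0 1 ∪ Icc 2 3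

/-- `f₁(x) = x²` on `[0,1]`, `f₁(x) = (x-2)^{1/3} + 2` on `[2,3]`. -/
noncomputable def f₁ (x : ℝ) : ℝ :=
  if x ≤ 1 then x ^ 2 else (x - 2) ^ ((1:ℝ)/3) + 2

/-- `f₂(x) = x + 2` on `[0,1]`, `f₂(x) = x - 2` on `[2,3]`. -/
noncomputable def f₂ (x : ℝ) : ℝ := if x ≤ 1 then x + 2 else x - 2

/-- `F = Γ(f₁) ∪ Γ(f₂)` as a relation on `X`. -/
noncomputable def Frel : Set (ℝ × ℝ) :=
  {p | p.1 ∈ XS ∧ (p.2 = f₁ p.1 ∨ p.2 = f₂ p.1)}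

/-- The Mahavier product `X_F^+`. -/
def MahavierPlus (F : Set (ℝ × ℝ)) : Set (ℕ → ℝ) :=
  {x | ∀ i : ℕ, (x i, x (i + 1)) ∈ F}

/-- The shift map on sequences. -/
def shiftMap (x : ℕ → ℝ) : ℕ → ℝ := fun i => x (i + 1)

/-- The product metric `d(x,y) = max_k |y_k - x_k|/2^k` (indices starting at 1). -/
noncomputable def rho (x y : ℕ → ℝ) : ℝ :=
  ⨆ k : ℕ, |y k - x k| / 2 ^ (k + 1)

/-- Distance of a point to a set with respect to `rho`. -/
noncomputable def rhoDist (x : ℕ → ℝ) (S : Set (ℕ → ℝ)) : ℝ :=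
  sInf {r : ℝ | ∃ a ∈ S, r = rho x a}

/-- The set `A` of sequences with all coordinates in `{0,2}`. -/
def Aset : Set (ℕ → ℝ) :=
  {x | x ∈ MahavierPlus Frel ∧ ∀ k : ℕ, x k = 0 ∨ x k = 2}

/-! Near `{0,2}` only the cube-root branch on `[2,3]` is expanding: it pushes every point of
`(2,3]` towards `3`. Given `z ∈ X_F^+` and a neighbourhood fixing the coordinates up to `N` to
within `δ`, first make the `N`-th coordinate differ from `0` and `2`: if `z` only takes the
values `0, 2` up to `N`, follow the branches of `z` starting from `z 0 + s`; each step replaces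
the offset from `z` by at most its cube root, so a small `s` stays `δ`-close. Then step into
`(2,3]` and take cube roots until above `5/2`, at some time `n`. There the two points split:
one keeps taking cube roots, the other subtracts `2`. Both are at distance `≥ 1/2` from
`{0,2}` at time `n`, hence at `rho`-distance `≥ 1/4` from `A`, and `3/2` apart at time
`n + 1`. -/

open Filter Topology

lemma exists_forall_dist_lt_imp_mem {α : Type*} [PseudoMetricSpace α] {U : Set (ℕ → α)}
    (hU : IsOpen U) {z : ℕ → α} (hz : z ∈ U) :
    ∃ N, ∃ δ > 0, ∀ x : ℕ → α, (∀ i ≤ N, dist (x i) (z i) < δ) → x ∈ U := by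
  obtain ⟨I, u, hu, hIU⟩ := isOpen_pi_iff.1 hU z hz
  obtain ⟨N, hIN⟩ := I.exists_nat_subset_range
  have hballs : ∀ᶠ δ in 𝓝[>] (0:ℝ), ∀ i ∈ I, Metric.ball (z i) δ ⊆ u i := by
    refine (eventually_all_finset I).2 fun i hi => ?_
    obtain ⟨ε, hε, hball⟩ := Metric.isOpen_iff.1 (hu i hi).1 (z i) (hu i hi).2
    filter_upwards [nhdsWithin_le_nhds (eventually_lt_nhds hε)] with δ hδ
    exact (Metric.ball_subset_ball hδ.le).trans hball
  obtain ⟨δ, hδ, hδ0⟩ := (hballs.and eventually_mem_nhdsWithin).exists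
  exact ⟨N, δ, hδ0, fun x hx => hIU fun i hi =>
    hδ i hi (hx i (Finset.mem_range.1 (hIN hi)).le)⟩

lemma mapsTo_shiftMap (F : Set (ℝ × ℝ)) : MapsTo shiftMap (MahavierPlus F) (MahavierPlus F) :=
  fun _ hx i => hx (i + 1)

lemma iterate_shiftMap_apply (n : ℕ) (x : ℕ → ℝ) (k : ℕ) : shiftMap^[n] x k = x (n + k) := by
  induction n generalizing x with
  | zero => simp
  | succ n ih =>
    rw [Function.iterate_succ_apply, ih]
    simp only [shiftMap]
    congr 1
    omega

def glue {α : Type*} (w : ℕ → α) (N : ℕ) (v : ℕ → α) : ℕ → α :=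
  fun i => if i ≤ N then w i else v (i - (N + 1))

lemma glue_of_le {α : Type*} {w v : ℕ → α} {N i : ℕ} (h : i ≤ N) : glue w N v i = w i :=
  if_pos h

lemma glue_of_lt {α : Type*} {w v : ℕ → α} {N i : ℕ} (h : N < i) :
    glue w N v i = v (i - (N + 1)) :=
  if_neg h.not_ge

lemma glue_add {α : Type*} (w v : ℕ → α) (N k : ℕ) : glue w N v (N + 1 + k) = v k := by
  rw [glue_of_lt (by omega)]
  congr 1
  omega

lemma glue_mem_MahavierPlus {F : Set (ℝ × ℝ)} {w v : ℕ → ℝ} {N : ℕ}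
    (hw : ∀ i < N, (w i, w (i + 1)) ∈ F) (hN : (w N, v 0) ∈ F) (hv : v ∈ MahavierPlus F) :
    glue w N v ∈ MahavierPlus F := by
  intro i
  rcases lt_trichotomy i N with h | rfl | h
  · rw [glue_of_le h.le, glue_of_le h]
    exact hw i h
  · rw [glue_of_le le_rfl, glue_of_lt (Nat.lt_succ_self i), Nat.sub_self]
    exact hN
  · rw [glue_of_lt h, glue_of_lt (by omega), show i + 1 - (N + 1) = i - (N + 1) + 1 by omega]
    exact hv _

lemma mem_Frel {p q : ℝ} : (p, q) ∈ Frel ↔ p ∈ XS ∧ (q = f₁ p ∨ q = f₂ p) :=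
  Iff.rfl

lemma XS_subset_Icc : XS ⊆ Icc 0 3 :=
  union_subset (Icc_subset_Icc le_rfl (by norm_num)) (Icc_subset_Icc (by norm_num) le_rfl)

lemma f₁_of_le_one {x : ℝ} (h : x ≤ 1) : f₁ x = x ^ 2 := if_pos h

lemma f₁_of_one_lt {x : ℝ} (h : 1 < x) : f₁ x = (x - 2) ^ ((1:ℝ)/3) + 2 := if_neg h.not_ge

lemma f₂_of_le_one {x : ℝ} (h : x ≤ 1) : f₂ x = x + 2 := if_pos h

lemma f₂_of_one_lt {x : ℝ} (h : 1 < x) : f₂ x = x - 2 := if_neg h.not_ge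

lemma f₂_mem_XS {a : ℝ} (ha : a ∈ XS) : f₂ a ∈ XS := by
  rcases ha with ⟨h0, h1⟩ | ⟨h2, h3⟩
  · rw [f₂_of_le_one h1]
    exact Or.inr ⟨by linarith, by linarith⟩
  · rw [f₂_of_one_lt (by linarith)]
    exact Or.inl ⟨by linarith, by linarith⟩

lemma iterate_f₂_mem_MahavierPlus {a : ℝ} (ha : a ∈ XS) :
    (fun k => f₂^[k] a) ∈ MahavierPlus Frel := fun k =>
  ⟨(MapsTo.iterate (fun _ => f₂_mem_XS) k) ha, Or.inr (Function.iterate_succ_apply' f₂ k a)⟩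

lemma eq_zero_or_two_of_mem_Frel {p q : ℝ} (h : (p, q) ∈ Frel) (hq : q = 0 ∨ q = 2) :
    p = 0 ∨ p = 2 := by
  obtain ⟨⟨h0, h1⟩ | ⟨h2, h3⟩, hpq⟩ := mem_Frel.1 h
  · rw [f₁_of_le_one h1, f₂_of_le_one h1] at hpq
    left
    rcases hq with rfl | rfl <;> rcases hpq with hpq | hpq <;> nlinarith
  · rw [f₁_of_one_lt (by linarith), f₂_of_one_lt (by linarith)] at hpq
    right
    have hcbrt := Real.rpow_nonneg (sub_nonneg.2 h2) ((1:ℝ)/3)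
    rcases hq with rfl | rfl <;> rcases hpq with hpq | hpq
    · linarith
    · linarith
    · have := (Real.rpow_eq_zero (sub_nonneg.2 h2) (by norm_num : (1:ℝ) / 3 ≠ 0)).1 (by linarith)
      linarith
    · linarith

lemma eq_zero_or_two_of_le {z : ℕ → ℝ} (hz : z ∈ MahavierPlus Frel) {N : ℕ}
    (hzN : z N = 0 ∨ z N = 2) {i : ℕ} (hi : i ≤ N) : z i = 0 ∨ z i = 2 :=
  Nat.decreasingInduction (fun k _ ih => eq_zero_or_two_of_mem_Frel (hz k) ih) hzN hi

lemma shiftMap_image_Aset_subset : shiftMap '' Aset ⊆ Aset := by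
  rintro _ ⟨x, ⟨hx, h02⟩, rfl⟩
  exact ⟨mapsTo_shiftMap _ hx, fun k => h02 (k + 1)⟩

lemma shiftMap_image_diff_Aset_subset :
    shiftMap '' (MahavierPlus Frel \ Aset) ⊆ MahavierPlus Frel \ Aset := by
  rintro _ ⟨x, ⟨hx, hxA⟩, rfl⟩
  refine ⟨mapsTo_shiftMap _ hx, fun ⟨_, h02⟩ => hxA ⟨hx, ?_⟩⟩
  rintro (_ | k)
  · exact eq_zero_or_two_of_mem_Frel (hx 0) (h02 0)
  · exact h02 k

lemma zero_mem_Aset : (fun _ => 0) ∈ Aset :=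
  ⟨fun _ => ⟨Or.inl ⟨le_rfl, zero_le_one⟩, Or.inl (by rw [f₁_of_le_one zero_le_one]; norm_num)⟩,
    fun _ => Or.inl rfl⟩

lemma le_rho_of_abs_sub_le {x y : ℕ → ℝ} {C : ℝ} (h : ∀ k, |y k - x k| ≤ C) (k : ℕ) :
    |y k - x k| / 2 ^ (k + 1) ≤ rho x y := by
  refine le_ciSup (f := fun k => |y k - x k| / 2 ^ (k + 1)) ⟨C, ?_⟩ k
  rintro _ ⟨j, rfl⟩
  exact (div_le_self (abs_nonneg _) (one_le_pow₀ one_le_two)).trans (h j)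

lemma le_rho {x y : ℕ → ℝ} (hx : x ∈ MahavierPlus Frel) (hy : y ∈ MahavierPlus Frel) (k : ℕ) :
    |y k - x k| / 2 ^ (k + 1) ≤ rho x y := by
  refine le_rho_of_abs_sub_le (C := 3) (fun j => abs_sub_le_iff.2 ?_) k
  have hxj := XS_subset_Icc (hx j).1
  have hyj := XS_subset_Icc (hy j).1
  constructor <;> linarith [hxj.1, hxj.2, hyj.1, hyj.2]

lemma le_rhoDist {x : ℕ → ℝ} {S : Set (ℕ → ℝ)} {c : ℝ} (hS : S.Nonempty)
    (h : ∀ a ∈ S, c ≤ rho x a) : c ≤ rhoDist x S := by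
  obtain ⟨a, ha⟩ := hS
  refine le_csInf ⟨_, a, ha, rfl⟩ ?_
  rintro _ ⟨b, hb, rfl⟩
  exact h b hb

lemma le_rhoDist_Aset {u : ℕ → ℝ} (hu : u ∈ MahavierPlus Frel) {r : ℝ} (h : 2 + r ≤ u 0) :
    r / 2 ≤ rhoDist u Aset := by
  refine le_rhoDist ⟨_, zero_mem_Aset⟩ fun a ha => ?_
  have ha0 : a 0 ≤ 2 := by rcases ha.2 0 with h | h <;> norm_num [h]
  calc r / 2 ≤ |a 0 - u 0| / 2 ^ (0 + 1) := by
        rw [abs_sub_comm, zero_add, pow_one]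
        gcongr
        exact le_abs.2 (Or.inl (by linarith))
    _ ≤ rho u a := le_rho hu ha.1 0

section CubeRootOrbit

/-- The orbit of `b` under `x ↦ (x - 2) ^ (1/3) + 2`. -/
noncomputable def cbrtOrbit (b : ℝ) (m : ℕ) : ℝ := (b - 2) ^ ((1 / 3 : ℝ) ^ m) + 2

variable {b : ℝ}

lemma cbrtOrbit_zero : cbrtOrbit b 0 = b := by
  simp [cbrtOrbit]

lemma cbrtOrbit_mem_Ioc (hb : b ∈ Ioc 2 3) (m : ℕ) : cbrtOrbit b m ∈ Ioc 2 3 := by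
  have hpos := Real.rpow_pos_of_pos (sub_pos.2 hb.1) ((1 / 3 : ℝ) ^ m)
  have hle := Real.rpow_le_one (sub_pos.2 hb.1).le (by linarith [hb.2])
    (by positivity : (0:ℝ) ≤ (1 / 3) ^ m)
  exact ⟨by unfold cbrtOrbit; linarith, by unfold cbrtOrbit; linarith⟩

lemma f₁_cbrtOrbit (hb : b ∈ Ioc 2 3) (m : ℕ) : f₁ (cbrtOrbit b m) = cbrtOrbit b (m + 1) := by
  rw [f₁_of_one_lt (by linarith [(cbrtOrbit_mem_Ioc hb m).1]), cbrtOrbit, add_sub_cancel_right,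
    ← Real.rpow_mul (sub_pos.2 hb.1).le, ← pow_succ, cbrtOrbit]

lemma cbrtOrbit_mem_MahavierPlus (hb : b ∈ Ioc 2 3) : cbrtOrbit b ∈ MahavierPlus Frel :=
  fun m => ⟨Or.inr (Ioc_subset_Icc_self (cbrtOrbit_mem_Ioc hb m)),
    Or.inl (f₁_cbrtOrbit hb m).symm⟩

lemma tendsto_cbrtOrbit (hb : 2 < b) : Tendsto (cbrtOrbit b) atTop (𝓝 3) := by
  have h := ((Real.continuousAt_const_rpow (sub_pos.2 hb).ne').tendsto.comp
    (tendsto_pow_atTop_nhds_zero_of_lt_one (by norm_num : (0:ℝ) ≤ 1 / 3) (by norm_num))).add_const 2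
  rw [Real.rpow_zero, show (1:ℝ) + 2 = 3 by norm_num] at h
  exact h

end CubeRootOrbit

lemma exists_mem_Frel_mem_Ioc {a : ℝ} (ha : a ∈ XS) (h0 : a ≠ 0) (h2 : a ≠ 2) :
    ∃ b ∈ Ioc (2:ℝ) 3, (a, b) ∈ Frel := by
  rcases ha with ⟨ha0, ha1⟩ | ⟨ha2, ha3⟩
  · have hpos : 0 < a := lt_of_le_of_ne ha0 (Ne.symm h0)
    exact ⟨a + 2, ⟨by linarith, by linarith⟩, Or.inl ⟨ha0, ha1⟩, Or.inr (f₂_of_le_one ha1).symm⟩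
  · have ha : a ∈ Ioc (2:ℝ) 3 := ⟨lt_of_le_of_ne ha2 (Ne.symm h2), ha3⟩
    refine ⟨f₁ a, ?_, Or.inr ⟨ha2, ha3⟩, Or.inl rfl⟩
    rw [← cbrtOrbit_zero (b := a), f₁_cbrtOrbit ha]
    exact cbrtOrbit_mem_Ioc ha 1

lemma exists_escaping_extensions {w : ℕ → ℝ} {N : ℕ} (hw : ∀ i < N, (w i, w (i + 1)) ∈ Frel)
    (hwX : w N ∈ XS) (h0 : w N ≠ 0) (h2 : w N ≠ 2) :
    ∃ x ∈ MahavierPlus Frel, ∃ y ∈ MahavierPlus Frel, (∀ i ≤ N, x i = w i ∧ y i = w i) ∧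
      ∃ n > 0, 5 / 2 ≤ x n ∧ 5 / 2 ≤ y n ∧ 5 / 2 ≤ x (n + 1) ∧ y (n + 1) ≤ 1 := by
  obtain ⟨b, hb, hwb⟩ := exists_mem_Frel_mem_Ioc hwX h0 h2
  obtain ⟨m, hm⟩ := eventually_atTop.1 ((tendsto_cbrtOrbit hb.1).eventually
    (eventually_ge_nhds (show (5 / 2 : ℝ) < 3 by norm_num)))
  have hg := cbrtOrbit_mem_Ioc hb m
  set x := glue w N (cbrtOrbit b)
  have hx : x ∈ MahavierPlus Frel :=
    glue_mem_MahavierPlus hw (by rwa [cbrtOrbit_zero]) (cbrtOrbit_mem_MahavierPlus hb)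
  set n := N + 1 + m
  have hxn : x n = cbrtOrbit b m := glue_add _ _ _ _
  set y := glue x n (fun k => f₂^[k] (cbrtOrbit b m - 2))
  have hy : y ∈ MahavierPlus Frel := by
    refine glue_mem_MahavierPlus (fun i _ => hx i) ?_ (iterate_f₂_mem_MahavierPlus ?_)
    · rw [hxn, Function.iterate_zero_apply, ← f₂_of_one_lt (by linarith [hg.1])]
      exact ⟨Or.inr (Ioc_subset_Icc_self hg), Or.inr rfl⟩
    · exact Or.inl ⟨by linarith [hg.1], by linarith [hg.2]⟩
  have hxw : ∀ i ≤ N, x i = w i := fun i hi => glue_of_le hi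
  have hyx : ∀ i ≤ n, y i = x i := fun i hi => glue_of_le hi
  have hxn1 : x (n + 1) = cbrtOrbit b (m + 1) := glue_add _ _ _ (m + 1)
  have hyn1 : y (n + 1) = cbrtOrbit b m - 2 := glue_add _ _ _ 0
  refine ⟨x, hx, y, hy, fun i hi => ⟨hxw i hi, (hyx i (by omega)).trans (hxw i hi)⟩, n, by omega,
    hxn ▸ hm m le_rfl, (hyx n le_rfl).trans hxn ▸ hm m le_rfl, hxn1 ▸ hm (m + 1) (by omega), ?_⟩
  rw [hyn1]
  linarith [hg.2]

section Perturbation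

noncomputable def perturbedOrbit (z : ℕ → ℝ) (s : ℝ) : ℕ → ℝ
  | 0 => z 0 + s
  | i + 1 => if z (i + 1) = f₁ (z i) then f₁ (perturbedOrbit z s i) else f₂ (perturbedOrbit z s i)

lemma perturbedOrbit_succ_eq (z : ℕ → ℝ) (s : ℝ) (i : ℕ) :
    perturbedOrbit z s (i + 1) = f₁ (perturbedOrbit z s i) ∨
      perturbedOrbit z s (i + 1) = f₂ (perturbedOrbit z s i) := by
  simp only [perturbedOrbit]
  split_ifs
  exacts [Or.inl rfl, Or.inr rfl]

lemma self_le_rpow_one_third {t : ℝ} (ht : t ∈ Ioc 0 1) : t ≤ t ^ ((1:ℝ) / 3) :=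
  Real.self_le_rpow_of_le_one ht.1.le ht.2 (by norm_num)

variable {c u : ℝ}

lemma mem_XS_of_sub_mem_Ioc (hc : c = 0 ∨ c = 2) (h : u - c ∈ Ioc 0 1) :
    u ∈ XS ∧ u ≠ 0 ∧ u ≠ 2 := by
  obtain ⟨h0, h1⟩ := h
  rcases hc with rfl | rfl
  · exact ⟨Or.inl ⟨by linarith, by linarith⟩, by linarith, by linarith⟩
  · exact ⟨Or.inr ⟨by linarith, by linarith⟩, by linarith, by linarith⟩

lemma f₁_sub_f₁_mem_Ioc (hc : c = 0 ∨ c = 2) (h : u - c ∈ Ioc 0 1) :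
    f₁ u - f₁ c ∈ Ioc 0 ((u - c) ^ ((1:ℝ) / 3)) := by
  have hcbrt := self_le_rpow_one_third h
  obtain ⟨h0, h1⟩ := h
  rcases hc with rfl | rfl
  · rw [f₁_of_le_one (by linarith), f₁_of_le_one zero_le_one]
    exact ⟨by nlinarith, by nlinarith⟩
  · rw [f₁_of_one_lt (by linarith), f₁_of_one_lt one_lt_two, sub_self,
      Real.zero_rpow (by norm_num), add_sub_add_right_eq_sub, sub_zero]
    exact ⟨Real.rpow_pos_of_pos h0 _, le_rfl⟩

lemma f₂_sub_f₂_mem_Ioc (hc : c = 0 ∨ c = 2) (h : u - c ∈ Ioc 0 1) :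
    f₂ u - f₂ c ∈ Ioc 0 ((u - c) ^ ((1:ℝ) / 3)) := by
  have hcbrt := self_le_rpow_one_third h
  obtain ⟨h0, h1⟩ := h
  rcases hc with rfl | rfl
  · rw [f₂_of_le_one (by linarith), f₂_of_le_one zero_le_one]
    exact ⟨by linarith, by linarith⟩
  · rw [f₂_of_one_lt (by linarith), f₂_of_one_lt one_lt_two]
    exact ⟨by linarith, by linarith⟩

lemma perturbedOrbit_sub_mem_Ioc {z : ℕ → ℝ} (hz : z ∈ MahavierPlus Frel) {N : ℕ}
    (hzN : ∀ i ≤ N, z i = 0 ∨ z i = 2) {s : ℝ} (hs : s ∈ Ioc 0 1) :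
    ∀ i ≤ N, perturbedOrbit z s i - z i ∈ Ioc 0 (s ^ ((1 / 3 : ℝ) ^ i))
  | 0, _ => by simpa [perturbedOrbit] using hs.1
  | i + 1, hi => by
    have hd := perturbedOrbit_sub_mem_Ioc hz hzN hs i (by omega)
    have hd1 : perturbedOrbit z s i - z i ∈ Ioc 0 1 :=
      ⟨hd.1, hd.2.trans (Real.rpow_le_one hs.1.le hs.2 (by positivity))⟩
    have hstep : perturbedOrbit z s (i + 1) - z (i + 1) ∈
        Ioc 0 ((perturbedOrbit z s i - z i) ^ ((1:ℝ) / 3)) := by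
      simp only [perturbedOrbit]
      split_ifs with h
      · rw [h]
        exact f₁_sub_f₁_mem_Ioc (hzN i (by omega)) hd1
      · rw [show z (i + 1) = f₂ (z i) from (hz i).2.resolve_left h]
        exact f₂_sub_f₂_mem_Ioc (hzN i (by omega)) hd1
    refine ⟨hstep.1, hstep.2.trans ?_⟩
    calc (perturbedOrbit z s i - z i) ^ ((1:ℝ) / 3)
        ≤ (s ^ ((1 / 3 : ℝ) ^ i)) ^ ((1:ℝ) / 3) := Real.rpow_le_rpow hd.1.le hd.2 (by norm_num)
      _ = s ^ ((1 / 3 : ℝ) ^ (i + 1)) := by rw [← Real.rpow_mul hs.1.le, pow_succ]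

lemma exists_nearby_chain_end_ne_zero_two {z : ℕ → ℝ} (hz : z ∈ MahavierPlus Frel) (N : ℕ)
    {δ : ℝ} (hδ : 0 < δ) :
    ∃ w : ℕ → ℝ, (∀ i < N, (w i, w (i + 1)) ∈ Frel) ∧ (∀ i ≤ N, |w i - z i| < δ) ∧
      w N ∈ XS ∧ w N ≠ 0 ∧ w N ≠ 2 := by
  by_cases hzN : z N = 0 ∨ z N = 2
  swap
  · obtain ⟨hz0, hz2⟩ := not_or.1 hzN
    exact ⟨z, fun i _ => hz i, fun i _ => by simpa using hδ, (hz N).1, hz0, hz2⟩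
  have hz02 : ∀ i ≤ N, z i = 0 ∨ z i = 2 := fun i => eq_zero_or_two_of_le hz hzN
  set η := min (δ / 2) 1
  have hη : η ∈ Ioc 0 1 := ⟨lt_min (half_pos hδ) one_pos, min_le_right _ _⟩
  have hηδ : η < δ := (min_le_left _ _).trans_lt (half_lt_self hδ)
  set s := η ^ 3 ^ N
  have hs : s ∈ Ioc 0 1 := ⟨pow_pos hη.1 _, pow_le_one₀ hη.1.le hη.2⟩
  have hsη : s ^ ((1 / 3 : ℝ) ^ N) = η := by
    rw [show (1 / 3 : ℝ) ^ N = ((3 ^ N : ℕ) : ℝ)⁻¹ by rw [one_div, inv_pow]; push_cast; rfl]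
    exact Real.pow_rpow_inv_natCast hη.1.le (by positivity)
  have hd := perturbedOrbit_sub_mem_Ioc hz hz02 hs
  have hd1 : ∀ i ≤ N, perturbedOrbit z s i - z i ∈ Ioc 0 1 := fun i hi =>
    ⟨(hd i hi).1, (hd i hi).2.trans (Real.rpow_le_one hs.1.le hs.2 (by positivity))⟩
  refine ⟨perturbedOrbit z s, fun i hi => ?_, fun i hi => ?_,
    mem_XS_of_sub_mem_Ioc (hz02 N le_rfl) (hd1 N le_rfl)⟩
  · exact ⟨(mem_XS_of_sub_mem_Ioc (hz02 i hi.le) (hd1 i hi.le)).1, perturbedOrbit_succ_eq z s i⟩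
  · rw [abs_of_pos (hd i hi).1]
    calc perturbedOrbit z s i - z i ≤ s ^ ((1 / 3 : ℝ) ^ i) := (hd i hi).2
      _ ≤ s ^ ((1 / 3 : ℝ) ^ N) := Real.rpow_le_rpow_of_exponent_ge hs.1 hs.2
          (pow_le_pow_of_le_one (by norm_num) (by norm_num) hi)
      _ < δ := hsη ▸ hηδ

end Perturbation

lemma exists_escaping_pair_near {z : ℕ → ℝ} (hz : z ∈ MahavierPlus Frel) (N : ℕ) {δ : ℝ}
    (hδ : 0 < δ) :
    ∃ x ∈ MahavierPlus Frel, ∃ y ∈ MahavierPlus Frel,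
      (∀ i ≤ N, dist (x i) (z i) < δ ∧ dist (y i) (z i) < δ) ∧
      ∃ n > 0, 5 / 2 ≤ x n ∧ 5 / 2 ≤ y n ∧ 5 / 2 ≤ x (n + 1) ∧ y (n + 1) ≤ 1 := by
  obtain ⟨w, hw, hwz, hwX, hw0, hw2⟩ := exists_nearby_chain_end_ne_zero_two hz N hδ
  obtain ⟨x, hx, y, hy, hxyw, hesc⟩ := exists_escaping_extensions hw hwX hw0 hw2
  refine ⟨x, hx, y, hy, fun i hi => ?_, hesc⟩
  rw [Real.dist_eq, Real.dist_eq, (hxyw i hi).1, (hxyw i hi).2]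
  exact ⟨hwz i hi, hwz i hi⟩

lemma quarter_lt_min_rho_rhoDist {x y : ℕ → ℝ} (hx : x ∈ MahavierPlus Frel)
    (hy : y ∈ MahavierPlus Frel) {n : ℕ} (hxn : 5 / 2 ≤ x n) (hyn : 5 / 2 ≤ y n)
    (hxn1 : 5 / 2 ≤ x (n + 1)) (hyn1 : y (n + 1) ≤ 1) :
    1 / 4 < min (rho (shiftMap^[n] x) (shiftMap^[n] y))
      (rhoDist (shiftMap^[n] x) Aset + rhoDist (shiftMap^[n] y) Aset) := by
  have hu := (mapsTo_shiftMap Frel).iterate n hx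
  have hv := (mapsTo_shiftMap Frel).iterate n hy
  have hrho := le_rho hu hv 1
  have hdu := le_rhoDist_Aset hu (r := 1 / 2) (by rw [iterate_shiftMap_apply, add_zero]; linarith)
  have hdv := le_rhoDist_Aset hv (r := 1 / 2) (by rw [iterate_shiftMap_apply, add_zero]; linarith)
  rw [iterate_shiftMap_apply, iterate_shiftMap_apply, abs_of_nonpos (by linarith)] at hrho
  refine lt_min ?_ (by linarith)
  norm_num at hrho
  linarith

/-- `σ_F^+(A) ⊆ A`, `σ_F^+(X_F^+ \ A) ⊆ X_F^+ \ A`, and `(X_F^+, σ_F^+)` has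
sensitive dependence on initial conditions with respect to `A`. -/
theorem mahavier_cbrt_sensitive_wrt_A :
    (shiftMap '' Aset ⊆ Aset) ∧
    (shiftMap '' (MahavierPlus Frel \ Aset) ⊆ MahavierPlus Frel \ Aset) ∧
    (∃ ε > (0:ℝ), ∀ U : Set (ℕ → ℝ), IsOpen U →
        (U ∩ MahavierPlus Frel).Nonempty →
        ∃ x ∈ U ∩ MahavierPlus Frel, ∃ y ∈ U ∩ MahavierPlus Frel, ∃ n : ℕ, 0 < n ∧
          min (rho (shiftMap^[n] x) (shiftMap^[n] y))
            (rhoDist (shiftMap^[n] x) Aset + rhoDist (shiftMap^[n] y) Aset)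
            > ε) := by
  refine ⟨shiftMap_image_Aset_subset, shiftMap_image_diff_Aset_subset, 1 / 4, by norm_num, ?_⟩
  rintro U hU ⟨z, hzU, hz⟩
  obtain ⟨N, δ, hδ, hU_of_near⟩ := exists_forall_dist_lt_imp_mem hU hzU
  obtain ⟨x, hx, y, hy, hnear, n, hn, hxn, hyn, hxn1, hyn1⟩ := exists_escaping_pair_near hz N hδ
  exact ⟨x, ⟨hU_of_near x fun i hi => (hnear i hi).1, hx⟩,
    y, ⟨hU_of_near y fun i hi => (hnear i hi).2, hy⟩,
    n, hn, quarter_lt_min_rho_rhoDist hx hy hxn hyn hxn1 hyn1⟩
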